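/- Let E ⊆ T² be an open set of class C² with P(E) ≤ M, and suppose two distinct connected components Γ_i, Γ_j of ∂E satisfy ∫_{Γ_i} κ_E dH¹ = 2π and ∫_{Γ_j} κ_E dH¹ = −2π. Then π² ≤ M · ‖κ_E − κ̄_E‖²_{L²(∂E)}. In particular, if ‖κ_E − κ̄_E‖²_{L²(∂E)} < π²/M, then ∂E cannot have two components with total curvatures 2π and −2π. -/

import Mathlib

/-!
By Cauchy–Schwarz on a single component `Γ`,
`(∫_Γ (κ - κ̄))² ≤ μ(Γ) ∫_Γ (κ - κ̄)² ≤ M ‖κ - κ̄‖²`.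
Since `∫_Γ (κ - κ̄) = ∫_Γ κ - κ̄ μ(Γ)`, choosing `Γ = Γi` when `κ̄ ≤ 0` and `Γ = Γj` when `κ̄ > 0`
makes the left-hand side at least `(2π)²`.
-/

open MeasureTheory

section

variable {α : Type*} [MeasurableSpace α] {μ : Measure α} {f : α → ℝ}

theorem sq_integral_le_measureReal_univ_mul_integral_sq [IsFiniteMeasure μ] (hf : MemLp f 2 μ) :
    (∫ x, f x ∂μ) ^ 2 ≤ μ.real Set.univ * ∫ x, f x ^ 2 ∂μ := by
  rcases eq_zero_or_neZero μ with rfl | _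
  · simp
  have jensen : (⨍ x, f x ∂μ) ^ 2 ≤ ⨍ x, f x ^ 2 ∂μ :=
    (even_two.convexOn_pow (𝕜 := ℝ)).map_average_le (continuous_pow 2).continuousOn
      isClosed_univ (by simp) (hf.integrable one_le_two) hf.integrable_sq
  have hvol : 0 < μ.real Set.univ := measureReal_univ_pos
  rw [average_eq, average_eq, smul_eq_mul, smul_eq_mul] at jensen
  field_simp at jensen
  exact jensen

theorem sq_setIntegral_le_mul_integral_sq [IsFiniteMeasure μ] {M : ℝ}
    (hμM : μ.real Set.univ ≤ M) (hf : MemLp f 2 μ) (s : Set α) :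
    (∫ x in s, f x ∂μ) ^ 2 ≤ M * ∫ x, f x ^ 2 ∂μ :=
  calc (∫ x in s, f x ∂μ) ^ 2
      ≤ (μ.restrict s).real Set.univ * ∫ x in s, f x ^ 2 ∂μ :=
        sq_integral_le_measureReal_univ_mul_integral_sq (hf.restrict s)
    _ ≤ M * ∫ x, f x ^ 2 ∂μ := by
        refine mul_le_mul ?_ ?_ (integral_nonneg fun _ ↦ sq_nonneg _)
          (measureReal_nonneg.trans hμM)
        · rw [measureReal_restrict_apply_univ]
          exact (measureReal_mono (Set.subset_univ s)).trans hμM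
        · exact setIntegral_le_integral hf.integrable_sq (.of_forall fun _ ↦ sq_nonneg _)

theorem setIntegral_sub_const [IsFiniteMeasure μ] (hf : Integrable f μ) (s : Set α) (c : ℝ) :
    ∫ x in s, (f x - c) ∂μ = ∫ x in s, f x ∂μ - μ.real s * c := by
  rw [integral_sub hf.integrableOn (integrable_const c), setIntegral_const, smul_eq_mul]

end

theorem no_opposite_total_curvature_components
    (M : ℝ) (hM : 0 < M)
    (α : Type) (_ : MeasurableSpace α) (μ : Measure α)
    (κ : α → ℝ) (Γi Γj : Set α)
    (hμM : μ Set.univ ≤ ENNReal.ofReal M)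
    (hκ : MemLp κ 2 μ)
    (hi : (∫ p in Γi, κ p ∂μ) = 2 * Real.pi)
    (hj : (∫ p in Γj, κ p ∂μ) = -(2 * Real.pi)) :
    Real.pi ^ 2 ≤ M * ∫ p, (κ p - (∫ q, κ q ∂μ) / (μ Set.univ).toReal) ^ 2 ∂μ := by
  have : IsFiniteMeasure μ := ⟨hμM.trans_lt ENNReal.ofReal_lt_top⟩
  set κ_mean := (∫ q, κ q ∂μ) / (μ Set.univ).toReal
  have hbound : ∀ Γ, (∫ p in Γ, (κ p - κ_mean) ∂μ) ^ 2 ≤ M * ∫ p, (κ p - κ_mean) ^ 2 ∂μ :=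
    sq_setIntegral_le_mul_integral_sq (ENNReal.toReal_le_of_le_ofReal hM.le hμM)
      (hκ.sub (memLp_const κ_mean))
  have hdev := setIntegral_sub_const (hκ.integrable one_le_two) (c := κ_mean)
  rcases le_or_gt κ_mean 0 with hneg | hpos
  · refine le_trans ?_ (hbound Γi)
    rw [hdev, hi]
    nlinarith [Real.pi_pos, mul_nonneg (measureReal_nonneg (μ := μ) (s := Γi)) (neg_nonneg.2 hneg)]
  · refine le_trans ?_ (hbound Γj)
    rw [hdev, hj]
    nlinarith [Real.pi_pos, mul_nonneg (measureReal_nonneg (μ := μ) (s := Γj)) hpos.le]
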